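/- For every bounded linear operator A on a complex Hilbert space, w(A)² ≤ (1/4)‖ A*A + AA* ‖ + (1/2)‖ |A| · |A*| ‖. -/

import Mathlib

/-
Put `P = |A|`, `Q = |A*|`. The mixed Schwarz inequality `|⟪Ax, x⟫| ≤ ⟪(P + Q)x, x⟫ / 2` gives
`w(A) ≤ ‖P + Q‖ / 2`, and the C⋆-identity gives
`‖P + Q‖² = ‖P² + Q² + PQ + QP‖ ≤ ‖A*A + AA*‖ + 2‖PQ‖`.

For the mixed Schwarz inequality, `A` intertwines `P` and `Q`: from `A P² = Q² A` one gets
`A f(P) = f(Q) A` for every continuous `f` by polynomial approximation. Hence, for `ε > 0`,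
`A = (Q + ε)^{1/2} D (P + ε)^{1/2}` with `D = A (P + ε)⁻¹` a contraction (`D*D = P²(P + ε)⁻²`), so
`|⟪Ax, x⟫| ≤ ‖(P + ε)^{1/2}x‖ ‖(Q + ε)^{1/2}x‖ ≤ (⟪(P + Q)x, x⟫ + 2ε‖x‖²) / 2`; let `ε → 0`.
-/

open ContinuousLinearMap

/-- The numerical radius of a bounded operator. -/
noncomputable def numRad {H : Type*} [NormedAddCommGroup H] [InnerProductSpace ℂ H]
    (A : H →L[ℂ] H) : ℝ :=
  sSup {r : ℝ | ∃ x : H, ‖x‖ = 1 ∧ r = ‖(inner ℂ (A x) x : ℂ)‖}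

open Polynomial Filter Topology

theorem SemiconjBy.aeval {R A : Type*} [CommSemiring R] [Semiring A] [Algebra R A] {b x y : A}
    (h : SemiconjBy b x y) (p : R[X]) : SemiconjBy b (aeval x p) (aeval y p) := by
  induction p using Polynomial.induction_on' with
  | add p q hp hq => simpa only [map_add] using hp.add_right hq
  | monomial n c =>
    simpa only [aeval_monomial] using
      SemiconjBy.mul_right (Algebra.commute_algebraMap_right c b) (h.pow_right n)

section CStarAlgebra

variable {A : Type*} [CStarAlgebra A]

theorem SemiconjBy.cfc_real {b a₁ a₂ : A} (h : SemiconjBy b a₁ a₂) (ha₁ : IsSelfAdjoint a₁)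
    (ha₂ : IsSelfAdjoint a₂) {f : ℝ → ℝ} (hf : Continuous f) :
    SemiconjBy b (cfc f a₁) (cfc f a₂) := by
  have hcpt : IsCompact (spectrum ℝ a₁ ∪ spectrum ℝ a₂) :=
    (spectrum.isCompact a₁).union (spectrum.isCompact a₂)
  obtain ⟨lo, hi, hK⟩ := bddBelow_bddAbove_iff_subset_Icc.mp ⟨hcpt.bddBelow, hcpt.bddAbove⟩
  choose p hp using fun n : ℕ ↦ exists_polynomial_near_of_continuousOn lo hi f hf.continuousOn
    (1 / (n + 1)) Nat.one_div_pos_of_nat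
  have hunif : TendstoUniformlyOn (fun n t ↦ (p n).eval t) f atTop (Set.Icc lo hi) := by
    rw [Metric.tendstoUniformlyOn_iff]
    intro ε hε
    obtain ⟨N, hN⟩ := exists_nat_one_div_lt hε
    filter_upwards [eventually_ge_atTop N] with n hn t ht
    rw [Real.dist_eq, abs_sub_comm]
    refine (hp n t ht).trans (lt_of_le_of_lt ?_ hN)
    gcongr
  have hlim (a : A) (ha : IsSelfAdjoint a) (hs : spectrum ℝ a ⊆ Set.Icc lo hi) :
      Tendsto (fun n ↦ Polynomial.aeval a (p n)) atTop (𝓝 (cfc f a)) := by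
    simpa only [cfc_polynomial _ a ha] using
      tendsto_cfc_fun (hunif.mono hs) (Eventually.of_forall fun n ↦ (p n).continuousOn)
  exact tendsto_nhds_unique ((hlim a₁ ha₁ (Set.subset_union_left.trans hK)).const_mul b)
    (((hlim a₂ ha₂ (Set.subset_union_right.trans hK)).mul_const b).congr
      fun n ↦ (h.aeval (p n)).eq.symm)

theorem norm_mul_cfc_inv_abs_add_le_one {a p : A} (hp : IsSelfAdjoint p)
    (hpa : p * p = star a * a) {ε : ℝ} (hε : 0 < ε) :
    ‖a * cfc (fun t ↦ (|t| + ε)⁻¹) p‖ ≤ 1 := by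
  have hg : Continuous fun t : ℝ ↦ (|t| + ε)⁻¹ := by
    fun_prop (disch := exact fun t ↦ by positivity)
  have hpp : p * p = cfc (fun t : ℝ ↦ t * t) p := by
    rw [cfc_mul (fun t : ℝ ↦ t) (fun t ↦ t) p, cfc_id' ℝ p]
  have hstar : star (a * cfc (fun t ↦ (|t| + ε)⁻¹) p) * (a * cfc (fun t ↦ (|t| + ε)⁻¹) p)
      = cfc (fun t ↦ (|t| + ε)⁻¹ * (t * t) * (|t| + ε)⁻¹) p := by
    rw [star_mul, (cfc_predicate (R := ℝ) (p := IsSelfAdjoint) _ p).star_eq, mul_assoc,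
      ← mul_assoc (star a), ← hpa, hpp,
      ← cfc_mul (fun t : ℝ ↦ t * t) _ p (by fun_prop) hg.continuousOn,
      ← cfc_mul _ (fun t : ℝ ↦ t * t * (|t| + ε)⁻¹) p hg.continuousOn
        ((continuous_id.mul continuous_id).mul hg).continuousOn]
    simp only [mul_assoc]
  have hbound : ‖star (a * cfc (fun t ↦ (|t| + ε)⁻¹) p) * (a * cfc (fun t ↦ (|t| + ε)⁻¹) p)‖
      ≤ 1 := by
    rw [hstar]
    refine norm_cfc_le zero_le_one fun t _ ↦ ?_
    have h0 : 0 ≤ |t| / (|t| + ε) := by positivity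
    have h1 : |t| / (|t| + ε) ≤ 1 := div_le_one_of_le₀ (by linarith) (by positivity)
    calc ‖(|t| + ε)⁻¹ * (t * t) * (|t| + ε)⁻¹‖ = (|t| / (|t| + ε)) ^ 2 := by
          rw [Real.norm_eq_abs, ← abs_mul_abs_self t, abs_of_nonneg (by positivity)]; ring
      _ ≤ 1 := pow_le_one₀ h0 h1
  rw [CStarRing.norm_star_mul_self] at hbound
  nlinarith [norm_nonneg (a * cfc (fun t ↦ (|t| + ε)⁻¹) p)]

theorem IsSelfAdjoint.norm_add_sq_le {p q : A} (hp : IsSelfAdjoint p) (hq : IsSelfAdjoint q) :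
    ‖p + q‖ ^ 2 ≤ ‖p * p + q * q‖ + 2 * ‖p * q‖ := by
  have hqp : ‖q * p‖ = ‖p * q‖ := by
    rw [← norm_star, star_mul, hp.star_eq, hq.star_eq]
  calc ‖p + q‖ ^ 2 = ‖(p * p + q * q) + (p * q + q * p)‖ := by
        rw [← (hp.add hq).norm_mul_self]; noncomm_ring
    _ ≤ ‖p * p + q * q‖ + (‖p * q‖ + ‖q * p‖) :=
        (norm_add_le _ _).trans (by gcongr; exact norm_add_le _ _)
    _ = ‖p * p + q * q‖ + 2 * ‖p * q‖ := by rw [hqp]; ring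

variable [PartialOrder A] [StarOrderedRing A]

theorem semiconjBy_of_mul_self_eq {a p q : A} (hp : 0 ≤ p) (hq : 0 ≤ q)
    (hpa : p * p = star a * a) (hqa : q * q = a * star a) : SemiconjBy a p q := by
  have hsqrt (c : A) (hc : 0 ≤ c) : cfc Real.sqrt (c * c) = c := by
    rw [← cfcₙ_eq_cfc, ← CFC.sqrt_eq_real_sqrt _ hc.isSelfAdjoint.mul_self_nonneg,
      CFC.sqrt_mul_self c hc]
  have h : SemiconjBy a (star a * a) (a * star a) := (mul_assoc _ _ _).symm
  simpa only [← hpa, ← hqa, hsqrt p hp, hsqrt q hq] using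
    h.cfc_real (.star_mul_self a) (.mul_star_self a) Real.continuous_sqrt

/- Witnesses `x = √(p + ε)`, `y = √(q + ε)`, `d = a (p + ε)⁻¹`; then `a = y d x` by the
intertwining `a √(p + ε) = √(q + ε) a`. Writing `|t|` for `t` keeps the functions continuous and
positive on all of `ℝ`, as `SemiconjBy.cfc_real` requires. -/
theorem exists_eq_mul_mul_norm_le_one {a p q : A} (hp : 0 ≤ p) (hq : 0 ≤ q)
    (hpa : p * p = star a * a) (hqa : q * q = a * star a) {ε : ℝ} (hε : 0 < ε) :
    ∃ x y d : A, IsSelfAdjoint x ∧ x * x = p + algebraMap ℝ A ε ∧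
      IsSelfAdjoint y ∧ y * y = q + algebraMap ℝ A ε ∧ ‖d‖ ≤ 1 ∧ a = y * d * x := by
  set u : ℝ → ℝ := fun t ↦ √(|t| + ε)
  have hu : Continuous u := by fun_prop
  have huu (c : A) (hc : 0 ≤ c) : cfc u c * cfc u c = c + algebraMap ℝ A ε := by
    rw [← cfc_mul u u c hu.continuousOn hu.continuousOn, ← cfc_id' ℝ c,
      ← cfc_add_const ε (fun t ↦ t) c, cfc_id' ℝ c]
    refine cfc_congr fun t ht ↦ ?_
    rw [Real.mul_self_sqrt (by positivity), abs_of_nonneg (spectrum_nonneg_of_nonneg hc ht)]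
  have hugu : cfc u p * cfc (fun t ↦ (|t| + ε)⁻¹) p * cfc u p = 1 := by
    have hg : Continuous fun t : ℝ ↦ (|t| + ε)⁻¹ := by
      fun_prop (disch := exact fun t ↦ by positivity)
    rw [← cfc_mul u _ p hu.continuousOn hg.continuousOn,
      ← cfc_mul (fun t ↦ u t * (|t| + ε)⁻¹) u p (hu.mul hg).continuousOn hu.continuousOn,
      ← cfc_const_one ℝ p]
    refine cfc_congr fun t _ ↦ ?_
    simp only [u]
    field_simp
    rw [Real.sq_sqrt (by positivity)]
  have hsemi : a * cfc u p = cfc u q * a :=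
    ((semiconjBy_of_mul_self_eq hp hq hpa hqa).cfc_real hp.isSelfAdjoint hq.isSelfAdjoint hu).eq
  refine ⟨cfc u p, cfc u q, a * cfc (fun t ↦ (|t| + ε)⁻¹) p, cfc_predicate _ _, huu p hp,
    cfc_predicate _ _, huu q hq, norm_mul_cfc_inv_abs_add_le_one hp.isSelfAdjoint hpa hε, ?_⟩
  rw [← mul_assoc, ← hsemi, mul_assoc a, mul_assoc a, hugu, mul_one]

end CStarAlgebra

open scoped InnerProductSpace
open RCLike

section InnerProductSpace

variable {H : Type*} [NormedAddCommGroup H] [InnerProductSpace ℂ H]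

theorem numRad_nonneg (a : H →L[ℂ] H) : 0 ≤ numRad a :=
  Real.sSup_nonneg fun _ ⟨_, _, hr⟩ ↦ hr ▸ norm_nonneg _

theorem numRad_le {a : H →L[ℂ] H} {c : ℝ} (hc : 0 ≤ c)
    (h : ∀ v : H, ‖v‖ = 1 → ‖⟪a v, v⟫_ℂ‖ ≤ c) : numRad a ≤ c :=
  Real.sSup_le (fun _ ⟨v, hv, hr⟩ ↦ hr ▸ h v hv) hc

variable [CompleteSpace H]

theorem norm_inner_apply_self_le_of_eq_mul_mul {a x y d : H →L[ℂ] H} (hy : IsSelfAdjoint y)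
    (hd : ‖d‖ ≤ 1) (had : a = y * d * x) (v : H) : ‖⟪a v, v⟫_ℂ‖ ≤ ‖x v‖ * ‖y v‖ := by
  calc ‖⟪a v, v⟫_ℂ‖ = ‖⟪d (x v), y v⟫_ℂ‖ := by
        rw [had, mul_apply_eq_comp, mul_apply_eq_comp, ← adjoint_inner_left, hy.adjoint_eq]
    _ ≤ ‖d (x v)‖ * ‖y v‖ := norm_inner_le_norm _ _
    _ ≤ ‖x v‖ * ‖y v‖ := by
        gcongr
        simpa using d.le_of_opNorm_le hd (x v)

theorem norm_apply_sq_eq_re_inner_of_mul_self_eq {x c : H →L[ℂ] H} (hx : IsSelfAdjoint x) {ε : ℝ}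
    (hxc : x * x = c + algebraMap ℝ (H →L[ℂ] H) ε) (v : H) :
    ‖x v‖ ^ 2 = re ⟪c v, v⟫_ℂ + ε * ‖v‖ ^ 2 := by
  rw [x.apply_norm_sq_eq_inner_adjoint_left, hx.adjoint_eq, ← mul_def, hxc, add_apply,
    inner_add_left, map_add, ContinuousLinearMap.algebraMap_apply, inner_smul_left_eq_smul,
    smul_re, inner_self_eq_norm_sq]

theorem norm_inner_apply_self_le_re_inner_add_div_two {a p q : H →L[ℂ] H} (hp : 0 ≤ p)
    (hq : 0 ≤ q) (hpa : p * p = adjoint a * a) (hqa : q * q = a * adjoint a) (v : H) :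
    ‖⟪a v, v⟫_ℂ‖ ≤ re ⟪(p + q) v, v⟫_ℂ / 2 := by
  have hreg (ε : ℝ) (hε : 0 < ε) : ‖⟪a v, v⟫_ℂ‖ ≤ re ⟪(p + q) v, v⟫_ℂ / 2 + ε * ‖v‖ ^ 2 := by
    obtain ⟨x, y, d, hx, hxx, hy, hyy, hd, had⟩ := exists_eq_mul_mul_norm_le_one hp hq
      (by rwa [star_eq_adjoint]) (by rwa [star_eq_adjoint]) hε
    calc ‖⟪a v, v⟫_ℂ‖ ≤ ‖x v‖ * ‖y v‖ := norm_inner_apply_self_le_of_eq_mul_mul hy hd had v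
      _ ≤ (‖x v‖ ^ 2 + ‖y v‖ ^ 2) / 2 := by nlinarith [two_mul_le_add_sq ‖x v‖ ‖y v‖]
      _ = re ⟪(p + q) v, v⟫_ℂ / 2 + ε * ‖v‖ ^ 2 := by
        rw [norm_apply_sq_eq_re_inner_of_mul_self_eq hx hxx,
          norm_apply_sq_eq_re_inner_of_mul_self_eq hy hyy, add_apply, inner_add_left, map_add]
        ring
  have hlim : Tendsto (fun ε ↦ re ⟪(p + q) v, v⟫_ℂ / 2 + ε * ‖v‖ ^ 2) (𝓝[>] 0)
      (𝓝 (re ⟪(p + q) v, v⟫_ℂ / 2)) :=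
    tendsto_nhdsWithin_of_tendsto_nhds (Continuous.tendsto' (by fun_prop) _ _ (by simp))
  exact ge_of_tendsto hlim (eventually_nhdsWithin_of_forall hreg)

end InnerProductSpace

theorem numRad_sq_le_with_norm {H : Type*} [NormedAddCommGroup H] [InnerProductSpace ℂ H]
    [CompleteSpace H] (A P Q : H →L[ℂ] H)
    (hP : P.IsPositive) (hP2 : P * P = adjoint A * A)
    (hQ : Q.IsPositive) (hQ2 : Q * Q = A * adjoint A) :
    numRad A ^ 2 ≤ (1 / 4) * ‖adjoint A * A + A * adjoint A‖ + (1 / 2) * ‖P * Q‖ := by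
  have hP0 : 0 ≤ P := (nonneg_iff_isPositive P).mpr hP
  have hQ0 : 0 ≤ Q := (nonneg_iff_isPositive Q).mpr hQ
  have hmixed := norm_inner_apply_self_le_re_inner_add_div_two hP0 hQ0 hP2 hQ2
  have hw : numRad A ≤ ‖P + Q‖ / 2 := by
    refine numRad_le (by positivity) fun v hv ↦ (hmixed v).trans ?_
    gcongr
    calc re ⟪(P + Q) v, v⟫_ℂ ≤ ‖(P + Q) v‖ * ‖v‖ := re_inner_le_norm _ _
      _ ≤ ‖P + Q‖ := by simpa [hv] using (P + Q).le_opNorm v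
  calc numRad A ^ 2 ≤ (‖P + Q‖ / 2) ^ 2 := pow_le_pow_left₀ (numRad_nonneg A) hw 2
    _ ≤ (‖P * P + Q * Q‖ + 2 * ‖P * Q‖) / 4 := by
        linarith [hP.isSelfAdjoint.norm_add_sq_le hQ.isSelfAdjoint]
    _ = (1 / 4) * ‖adjoint A * A + A * adjoint A‖ + (1 / 2) * ‖P * Q‖ := by
        rw [hP2, hQ2]; ring
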